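/- arXiv:1507.05841 — 3 statements merged into one kernel-verified Lean document; each statement's English description precedes it below -/
import Mathlib

section
/- Let G and H be finite simple graphs with no isolated vertices, and define the itemsets S = { S_u | u ∈ V_G } over E_G (S_u the edges incident to u) and T = { T_h | h ∈ V_H } over E_H. If there exists a bijection J : E_G → E_H with J(S) = T (itemset isomorphism), then G and H are isomorphic as graphs. -/
theorem stmt_10 {VG VH : Type*} [Fintype VG] [Fintype VH] [DecidableEq VG] [DecidableEq VH]
    (EG : Finset (Finset VG)) (EH : Finset (Finset VH))
    (hG : ∀ e ∈ EG, e.card = 2) (hH : ∀ e ∈ EH, e.card = 2)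
    (hniG : ∀ v : VG, ∃ e ∈ EG, v ∈ e) (hniH : ∀ v : VH, ∃ e ∈ EH, v ∈ e)
    (h : ∃ J : Finset VG → Finset VH, Set.BijOn J ↑EG ↑EH ∧
      (Finset.univ.image (fun u : VG => EG.filter (fun e => u ∈ e))).image
          (fun A => A.image J) =
        Finset.univ.image (fun h : VH => EH.filter (fun e => h ∈ e))) :
    ∃ σ : VG → VH, Function.Bijective σ ∧
      ∀ v w : VG, ({v, w} : Finset VG) ∈ EG ↔ ({σ v, σ w} : Finset VH) ∈ EH := by
  classical
  obtain ⟨J, hJ, hF⟩ := h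
  set S : VG → Finset (Finset VG) := fun u => EG.filter (fun e => u ∈ e) with hSdef
  set T : VH → Finset (Finset VH) := fun h => EH.filter (fun e => h ∈ e) with hTdef
  set F : VG → Finset (Finset VH) := fun u => (S u).image J with hFdef
  have hF' : Finset.univ.image F = Finset.univ.image T := by
    rw [← hF, Finset.image_image]
    rfl
  have hJinj : Set.InjOn J (EG : Set (Finset VG)) := hJ.injOn
  have hJmaps : ∀ e ∈ EG, J e ∈ EH := fun e he => hJ.mapsTo he
  have hSsub : ∀ u, S u ⊆ EG := fun u => Finset.filter_subset _ _
  have himg_inj : ∀ u v : VG, F u = F v → S u = S v := by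
    intro u v huv
    ext e
    constructor <;> intro he
    · have h1 : J e ∈ F v := huv ▸ Finset.mem_image_of_mem J he
      obtain ⟨e', he', hee⟩ := Finset.mem_image.1 h1
      have : e' = e := hJinj (hSsub v he') (hSsub u he) hee
      exact this ▸ he'
    · have h1 : J e ∈ F u := huv ▸ Finset.mem_image_of_mem J he
      obtain ⟨e', he', hee⟩ := Finset.mem_image.1 h1
      have : e' = e := hJinj (hSsub u he') (hSsub v he) hee
      exact this ▸ he'
  have hFmem : ∀ u : VG, ∃ h0 : VH, F u = T h0 := by
    intro u
    have : F u ∈ Finset.univ.image T := by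
      rw [← hF']; exact Finset.mem_image_of_mem F (Finset.mem_univ u)
    obtain ⟨h0, _, hh0⟩ := Finset.mem_image.1 this
    exact ⟨h0, hh0.symm⟩
  have hTmem : ∀ h0 : VH, ∃ u : VG, F u = T h0 := by
    intro h0
    have : T h0 ∈ Finset.univ.image F := by
      rw [hF']; exact Finset.mem_image_of_mem T (Finset.mem_univ h0)
    obtain ⟨u, _, hu⟩ := Finset.mem_image.1 this
    exact ⟨u, hu⟩
  have hSne : ∀ u, (S u).Nonempty := by
    intro u
    obtain ⟨e, he, hu⟩ := hniG u
    exact ⟨e, Finset.mem_filter.2 ⟨he, hu⟩⟩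
  have hpairG : ∀ e ∈ EG, ∀ v w : VG, v ∈ e → w ∈ e → v ≠ w → e = {v, w} := by
    intro e he v w hv hw hvw
    have hsub : ({v, w} : Finset VG) ⊆ e := by
      intro x hx
      rcases Finset.mem_insert.1 hx with rfl | hx
      · exact hv
      · exact (Finset.mem_singleton.1 hx) ▸ hw
    have hc : ({v, w} : Finset VG).card = 2 := Finset.card_pair hvw
    exact (Finset.eq_of_subset_of_card_le hsub (by rw [hG e he, hc])).symm
  have hpairH : ∀ f ∈ EH, ∀ v w : VH, v ∈ f → w ∈ f → v ≠ w → f = {v, w} := by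
    intro f hf v w hv hw hvw
    have hsub : ({v, w} : Finset VH) ⊆ f := by
      intro x hx
      rcases Finset.mem_insert.1 hx with rfl | hx
      · exact hv
      · exact (Finset.mem_singleton.1 hx) ▸ hw
    have hc : ({v, w} : Finset VH).card = 2 := Finset.card_pair hvw
    exact (Finset.eq_of_subset_of_card_le hsub (by rw [hH f hf, hc])).symm
  -- main fiber-cardinality lemma
  have hmain : ∀ (u0 : VG) (h0 : VH), F u0 = T h0 →
      (Finset.univ.filter (fun u => S u = S u0)).card =
      (Finset.univ.filter (fun h1 => T h1 = T h0)).card := by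
    intro u0 h0 hFT
    obtain ⟨e0, he0⟩ := hSne u0
    have he0G : e0 ∈ EG := hSsub u0 he0
    have hf0H : J e0 ∈ EH := hJmaps e0 he0G
    have hf0 : J e0 ∈ T h0 := hFT ▸ Finset.mem_image_of_mem J he0
    have hGsub : Finset.univ.filter (fun u => S u = S u0) ⊆ e0 := by
      intro w hw
      have hw' : S w = S u0 := (Finset.mem_filter.1 hw).2
      have : e0 ∈ S w := hw' ▸ he0
      exact (Finset.mem_filter.1 this).2
    have hHsub : Finset.univ.filter (fun h1 => T h1 = T h0) ⊆ J e0 := by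
      intro w hw
      have hw' : T w = T h0 := (Finset.mem_filter.1 hw).2
      have : J e0 ∈ T w := hw' ▸ hf0
      exact (Finset.mem_filter.1 this).2
    have hG1 : 0 < (Finset.univ.filter (fun u => S u = S u0)).card :=
      Finset.card_pos.2 ⟨u0, Finset.mem_filter.2 ⟨Finset.mem_univ _, rfl⟩⟩
    have hH1 : 0 < (Finset.univ.filter (fun h1 => T h1 = T h0)).card :=
      Finset.card_pos.2 ⟨h0, Finset.mem_filter.2 ⟨Finset.mem_univ _, rfl⟩⟩
    have hG2 : (Finset.univ.filter (fun u => S u = S u0)).card ≤ 2 := by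
      have := Finset.card_le_card hGsub
      rwa [hG e0 he0G] at this
    have hH2 : (Finset.univ.filter (fun h1 => T h1 = T h0)).card ≤ 2 := by
      have := Finset.card_le_card hHsub
      rwa [hH (J e0) hf0H] at this
    have hiff : 1 < (Finset.univ.filter (fun u => S u = S u0)).card ↔
        1 < (Finset.univ.filter (fun h1 => T h1 = T h0)).card := by
      constructor
      · intro h2
        have hfe : Finset.univ.filter (fun u => S u = S u0) = e0 :=
          Finset.eq_of_subset_of_card_le hGsub (by rw [hG e0 he0G]; omega)
        have hsub2 : (J e0 : Finset VH) ⊆ Finset.univ.filter (fun h1 => T h1 = T h0) := by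
          intro h1 hh1
          obtain ⟨u1, hu1⟩ := hTmem h1
          have hJe : J e0 ∈ T h1 := Finset.mem_filter.2 ⟨hf0H, hh1⟩
          rw [← hu1] at hJe
          obtain ⟨e1, he1, hee⟩ := Finset.mem_image.1 hJe
          have he1e0 : e1 = e0 := hJinj (hSsub u1 he1) he0G hee
          have he1' : e0 ∈ S u1 := he1e0 ▸ he1
          have hu1e : u1 ∈ e0 := (Finset.mem_filter.1 he1').2
          have hu1f : u1 ∈ Finset.univ.filter (fun u => S u = S u0) := hfe ▸ hu1e
          have hSu1 : S u1 = S u0 := (Finset.mem_filter.1 hu1f).2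
          have hT1 : T h1 = T h0 := by
            rw [← hu1, ← hFT]
            show (S u1).image J = (S u0).image J
            rw [hSu1]
          exact Finset.mem_filter.2 ⟨Finset.mem_univ _, hT1⟩
        have := Finset.card_le_card hsub2
        rw [hH (J e0) hf0H] at this
        omega
      · intro h2
        have hfe : Finset.univ.filter (fun h1 => T h1 = T h0) = J e0 :=
          Finset.eq_of_subset_of_card_le hHsub (by rw [hH (J e0) hf0H]; omega)
        have hsub2 : (e0 : Finset VG) ⊆ Finset.univ.filter (fun u => S u = S u0) := by
          intro v1 hv1
          have he0S : e0 ∈ S v1 := Finset.mem_filter.2 ⟨he0G, hv1⟩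
          obtain ⟨h1, hh1⟩ := hFmem v1
          have hJe : J e0 ∈ T h1 := hh1 ▸ Finset.mem_image_of_mem J he0S
          have hh1e : h1 ∈ (J e0 : Finset VH) := (Finset.mem_filter.1 hJe).2
          have hh1f : h1 ∈ Finset.univ.filter (fun h2 => T h2 = T h0) := hfe ▸ hh1e
          have hT1 : T h1 = T h0 := (Finset.mem_filter.1 hh1f).2
          have hFv : F v1 = F u0 := by rw [hh1, hT1, hFT]
          exact Finset.mem_filter.2 ⟨Finset.mem_univ _, himg_inj v1 u0 hFv⟩
        have := Finset.card_le_card hsub2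
        rw [hG e0 he0G] at this
        omega
    omega
  -- all fibers of F and T over any B have equal cardinality
  have hfib : ∀ B : Finset (Finset VH),
      (Finset.univ.filter (fun u => F u = B)).card =
      (Finset.univ.filter (fun h1 => T h1 = B)).card := by
    intro B
    by_cases hB : B ∈ Finset.univ.image T
    · obtain ⟨h0, _, hh0⟩ := Finset.mem_image.1 hB
      obtain ⟨u0, hu0⟩ := hTmem h0
      have h1 : Finset.univ.filter (fun u => F u = B) =
          Finset.univ.filter (fun u => S u = S u0) := by
        apply Finset.filter_congr
        intro u _
        constructor
        · intro hu
          exact himg_inj u u0 (by rw [hu, ← hh0, ← hu0])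
        · intro hu
          show F u = B
          rw [← hh0, ← hu0]
          show (S u).image J = (S u0).image J
          rw [hu]
      have h2 : Finset.univ.filter (fun h1 => T h1 = B) =
          Finset.univ.filter (fun h1 => T h1 = T h0) := by
        rw [hh0]
      rw [h1, h2]
      exact hmain u0 h0 (by rw [hu0])
    · have h1 : Finset.univ.filter (fun u => F u = B) = ∅ := by
        rw [Finset.filter_eq_empty_iff]
        intro u _ hu
        exact hB (hF' ▸ hu ▸ Finset.mem_image_of_mem F (Finset.mem_univ u))
      have h2 : Finset.univ.filter (fun h1 => T h1 = B) = ∅ := by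
        rw [Finset.filter_eq_empty_iff]
        intro h1 _ hh1
        exact hB (hh1 ▸ Finset.mem_image_of_mem T (Finset.mem_univ h1))
      rw [h1, h2]
      rfl
  -- build the bijection
  have mid : ∀ B : Finset (Finset VH), {u : VG // F u = B} ≃ {h1 : VH // T h1 = B} := by
    intro B
    apply Fintype.equivOfCardEq
    rw [Fintype.card_subtype, Fintype.card_subtype]
    exact hfib B
  let E : VG ≃ VH :=
    (Equiv.sigmaFiberEquiv F).symm.trans
      ((Equiv.sigmaCongrRight mid).trans (Equiv.sigmaFiberEquiv T))
  have hσ : ∀ u : VG, T (E u) = F u := by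
    intro u
    exact ((Equiv.sigmaCongrRight mid) ((Equiv.sigmaFiberEquiv F).symm u)).2.2
  refine ⟨E, E.bijective, ?_⟩
  intro v w
  by_cases hvw : v = w
  · subst hvw
    constructor
    · intro hmem
      have := hG _ hmem
      simp at this
    · intro hmem
      have := hH _ hmem
      simp at this
  · have hEvw : E v ≠ E w := fun hc => hvw (E.injective hc)
    constructor
    · intro he
      have hv : ({v, w} : Finset VG) ∈ S v := Finset.mem_filter.2 ⟨he, by simp⟩
      have hw : ({v, w} : Finset VG) ∈ S w := Finset.mem_filter.2 ⟨he, by simp⟩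
      have h1 : J {v, w} ∈ T (E v) := by
        rw [hσ v]; exact Finset.mem_image_of_mem J hv
      have h2 : J {v, w} ∈ T (E w) := by
        rw [hσ w]; exact Finset.mem_image_of_mem J hw
      have hEv : E v ∈ J {v, w} := (Finset.mem_filter.1 h1).2
      have hEw : E w ∈ J {v, w} := (Finset.mem_filter.1 h2).2
      have hJEH : J {v, w} ∈ EH := (Finset.mem_filter.1 h1).1
      have := hpairH (J {v, w}) hJEH (E v) (E w) hEv hEw hEvw
      exact this ▸ hJEH
    · intro hf
      have h1 : ({E v, E w} : Finset VH) ∈ T (E v) := Finset.mem_filter.2 ⟨hf, by simp⟩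
      have h2 : ({E v, E w} : Finset VH) ∈ T (E w) := Finset.mem_filter.2 ⟨hf, by simp⟩
      rw [hσ v] at h1
      rw [hσ w] at h2
      obtain ⟨e1, he1, hJe1⟩ := Finset.mem_image.1 h1
      obtain ⟨e2, he2, hJe2⟩ := Finset.mem_image.1 h2
      have he12 : e1 = e2 := hJinj (hSsub v he1) (hSsub w he2) (by rw [hJe1, hJe2])
      have hvE : v ∈ e1 := (Finset.mem_filter.1 he1).2
      have hwE : w ∈ e1 := he12 ▸ (Finset.mem_filter.1 he2).2
      have he1G : e1 ∈ EG := hSsub v he1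
      have := hpairG e1 he1G v w hvE hwE hvw
      exact this ▸ he1G
end

section
/- Combining reductions: two finite simple graphs G and H with no isolated vertices are isomorphic if and only if the incidence itemsets S = { S_u | u ∈ V_G } over E_G and T = { T_h | h ∈ V_H } over E_H are isomorphic as itemsets. -/
/-!
The map `u ↦ S_u` is injective except on the components of `G` that are a single edge `{u, v}`,
where `S_u = S_v = {{u, v}}`. So the itemset `S` only forgets how many vertices share a star, and
this multiplicity is recovered from `S` itself: for an edge `e ∈ s ∈ S`, the fibre of `s` times the
number of stars containing `e` is always `2`. An itemset isomorphism `J` preserves the second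
factor, hence the fibre sizes, and gluing bijections between corresponding fibres gives a vertex
bijection `σ` with `T_{σ u} = J '' S_u`. Adjacency is then read off stars: `{v, w}` is an edge iff
`S_v` and `S_w` meet. Conversely a graph isomorphism `σ` induces `J = (σ '' ·)`.
-/

open Finset

lemma card_filter_eq_mul_card_image_pair {α β : Type*} [DecidableEq α] [DecidableEq β]
    (f : α → β) {a b : α} (hab : a ≠ b) :
    #(({a, b} : Finset α).filter (fun x => f x = f a)) * #(({a, b} : Finset α).image f) = 2 := by
  by_cases hf : f b = f a
  · simp [filter_insert, filter_singleton, hf, hab]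
  · simp [filter_insert, hf, hab, Ne.symm hf]

lemma exists_equiv_comp_eq_of_card_fiber_eq {α β γ : Type*} [Fintype α] [Fintype β]
    [DecidableEq γ] {f : α → γ} {g : β → γ}
    (h : ∀ c, #{a | f a = c} = #{b | g b = c}) : ∃ σ : α ≃ β, ∀ a, g (σ a) = f a :=
  ⟨Equiv.ofFiberEquiv fun c => Fintype.equivOfCardEq <| by
      simpa only [Fintype.card_subtype] using h c,
    Equiv.ofFiberEquiv_map _⟩

section VertexStar

variable {V : Type*} [DecidableEq V]

def vertexStar (E : Finset (Finset V)) (u : V) : Finset (Finset V) := E.filter (fun e => u ∈ e)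

@[simp] lemma mem_vertexStar {E : Finset (Finset V)} {u : V} {e : Finset V} :
    e ∈ vertexStar E u ↔ e ∈ E ∧ u ∈ e := mem_filter

lemma vertexStar_subset (E : Finset (Finset V)) (u : V) : vertexStar E u ⊆ E := filter_subset _ _

def incidenceItemset [Fintype V] (E : Finset (Finset V)) : Finset (Finset (Finset V)) :=
  univ.image (vertexStar E)

lemma pair_mem_iff_vertexStar_inter_nonempty {E : Finset (Finset V)} (hE : ∀ e ∈ E, #e = 2)
    {v w : V} (hvw : v ≠ w) : {v, w} ∈ E ↔ (vertexStar E v ∩ vertexStar E w).Nonempty := by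
  refine ⟨fun h => ⟨{v, w}, by simp [h]⟩, ?_⟩
  rintro ⟨e, he⟩
  simp only [mem_inter, mem_vertexStar] at he
  have hsub : {v, w} ⊆ e := insert_subset he.1.2 (singleton_subset_iff.2 he.2.2)
  rw [eq_of_subset_of_card_le hsub (by rw [hE e he.1.1, card_pair hvw])]
  exact he.1.1

lemma exists_eq_pair_of_mem {e : Finset V} (he : #e = 2) {u : V} (hu : u ∈ e) :
    ∃ v, v ≠ u ∧ e = {u, v} := by
  obtain ⟨a, b, hab, rfl⟩ := card_eq_two.1 he
  simp only [mem_insert, mem_singleton] at hu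
  rcases hu with rfl | rfl
  · exact ⟨b, hab.symm, rfl⟩
  · exact ⟨a, hab, pair_comm _ _⟩

lemma card_fiber_vertexStar_mul_card_filter_mem [Fintype V] {E : Finset (Finset V)}
    (hE : ∀ e ∈ E, #e = 2) {u : V} {e : Finset V} (he : e ∈ vertexStar E u) :
    #{w | vertexStar E w = vertexStar E u} * #{s ∈ incidenceItemset E | e ∈ s} = 2 := by
  rw [mem_vertexStar] at he
  obtain ⟨v, hvu, rfl⟩ := exists_eq_pair_of_mem (hE _ he.1) he.2
  have hfiber : ({w | vertexStar E w = vertexStar E u} : Finset V) =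
      ({u, v} : Finset V).filter (fun w => vertexStar E w = vertexStar E u) := by
    ext w
    simp only [mem_filter, mem_univ, true_and]
    refine iff_and_self.2 fun hw => ?_
    have : {u, v} ∈ vertexStar E w := hw ▸ mem_vertexStar.2 he
    exact (mem_vertexStar.1 this).2
  have hstars : ({s ∈ incidenceItemset E | {u, v} ∈ s} : Finset _) =
      ({u, v} : Finset V).image (vertexStar E) := by
    ext s
    simp only [incidenceItemset, mem_filter, mem_image, mem_univ, true_and]
    constructor
    · rintro ⟨⟨w, rfl⟩, hw⟩
      exact ⟨w, (mem_vertexStar.1 hw).2, rfl⟩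
    · rintro ⟨w, hw, rfl⟩
      exact ⟨⟨w, rfl⟩, mem_vertexStar.2 ⟨he.1, hw⟩⟩
  rw [hfiber, hstars]
  exact card_filter_eq_mul_card_image_pair _ hvu.symm

lemma subset_of_mem_incidenceItemset [Fintype V] {E : Finset (Finset V)} {s : Finset (Finset V)}
    (hs : s ∈ incidenceItemset E) : s ⊆ E := by
  obtain ⟨u, -, rfl⟩ := mem_image.1 hs
  exact vertexStar_subset E u

end VertexStar

section ItemsetIso

variable {VG VH : Type*} [DecidableEq VG] [DecidableEq VH]
  {EG : Finset (Finset VG)} {EH : Finset (Finset VH)} {J : Finset VG → Finset VH}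

lemma finsetCongr_mem_iff (hG : ∀ e ∈ EG, #e = 2) (hH : ∀ e ∈ EH, #e = 2) (σ : VG ≃ VH)
    (hσ : ∀ v w : VG, {v, w} ∈ EG ↔ {σ v, σ w} ∈ EH) (e : Finset VG) :
    σ.finsetCongr e ∈ EH ↔ e ∈ EG := by
  by_cases he : #e = 2
  · obtain ⟨a, b, -, rfl⟩ := card_eq_two.1 he
    simpa [Equiv.finsetCongr_apply] using (hσ a b).symm
  · exact iff_of_false (fun h => he (by simpa [Equiv.finsetCongr_apply] using hH _ h))
      (fun h => he (hG _ h))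

lemma image_vertexStar_finsetCongr (hG : ∀ e ∈ EG, #e = 2) (hH : ∀ e ∈ EH, #e = 2)
    (σ : VG ≃ VH) (hσ : ∀ v w : VG, {v, w} ∈ EG ↔ {σ v, σ w} ∈ EH) (u : VG) :
    (vertexStar EG u).image σ.finsetCongr = vertexStar EH (σ u) := by
  ext f
  obtain ⟨e, rfl⟩ := σ.finsetCongr.surjective f
  rw [σ.finsetCongr.injective.mem_finset_image, mem_vertexStar, mem_vertexStar,
    finsetCongr_mem_iff hG hH σ hσ]
  simp [Equiv.finsetCongr_apply]

lemma image_incidenceItemset_finsetCongr [Fintype VG] [Fintype VH]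
    (hG : ∀ e ∈ EG, #e = 2) (hH : ∀ e ∈ EH, #e = 2)
    (σ : VG ≃ VH) (hσ : ∀ v w : VG, {v, w} ∈ EG ↔ {σ v, σ w} ∈ EH) :
    (incidenceItemset EG).image (fun A => A.image σ.finsetCongr) = incidenceItemset EH := by
  simp only [incidenceItemset, image_image, Function.comp_def,
    image_vertexStar_finsetCongr hG hH σ hσ]
  rw [← Function.comp_def, ← image_image, image_univ_equiv]

lemma card_filter_apply_mem_incidenceItemset [Fintype VG] [Fintype VH] (hJ : Set.InjOn J EG)
    (hST : (incidenceItemset EG).image (fun A => A.image J) = incidenceItemset EH)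
    {e : Finset VG} (he : e ∈ EG) :
    #{t ∈ incidenceItemset EH | J e ∈ t} = #{s ∈ incidenceItemset EG | e ∈ s} := by
  rw [← hST, filter_image, card_image_of_injOn]
  · refine congrArg card (filter_congr fun s hs => ?_)
    have := hJ.mem_image_iff (coe_subset.2 (subset_of_mem_incidenceItemset hs)) he
    rwa [← coe_image, mem_coe, mem_coe] at this
  · intro s hs t ht hst
    exact (image_eq_image_iff_of_injOn hJ (subset_of_mem_incidenceItemset (mem_filter.1 hs).1)
      (subset_of_mem_incidenceItemset (mem_filter.1 ht).1)).1 hst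

lemma exists_equiv_vertexStar_eq_image [Fintype VG] [Fintype VH]
    (hG : ∀ e ∈ EG, #e = 2) (hH : ∀ e ∈ EH, #e = 2)
    (hniG : ∀ v : VG, ∃ e ∈ EG, v ∈ e) (hJ : Set.InjOn J EG)
    (hST : (incidenceItemset EG).image (fun A => A.image J) = incidenceItemset EH) :
    ∃ σ : VG ≃ VH, ∀ u, vertexStar EH (σ u) = (vertexStar EG u).image J := by
  have hrange : univ.image (fun u => (vertexStar EG u).image J) = univ.image (vertexStar EH) := by
    simpa only [incidenceItemset, image_image, Function.comp_def] using hST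
  refine exists_equiv_comp_eq_of_card_fiber_eq fun c => ?_
  by_cases hc : c ∈ univ.image (vertexStar EH)
  · obtain ⟨h, -, rfl⟩ := mem_image.1 hc
    obtain ⟨u, -, hu⟩ := mem_image.1 (hrange ▸ hc)
    obtain ⟨e, heG, hue⟩ := hniG u
    have he : e ∈ vertexStar EG u := mem_vertexStar.2 ⟨heG, hue⟩
    have hJe : J e ∈ vertexStar EH h := hu ▸ mem_image_of_mem J he
    have hfiber : #{w | (vertexStar EG w).image J = vertexStar EH h} =
        #{w | vertexStar EG w = vertexStar EG u} := by
      simp only [← hu, image_eq_image_iff_of_injOn hJ (vertexStar_subset _ _)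
        (vertexStar_subset _ _)]
    have hcountG := card_fiber_vertexStar_mul_card_filter_mem hG he
    have hcountH := card_fiber_vertexStar_mul_card_filter_mem hH hJe
    rw [card_filter_apply_mem_incidenceItemset hJ hST heG] at hcountH
    rw [hfiber]
    exact Nat.eq_of_mul_eq_mul_right (Nat.pos_of_mul_pos_left (hcountG ▸ two_pos))
      (hcountG.trans hcountH.symm)
  · have hc' : c ∉ univ.image (fun u => (vertexStar EG u).image J) := hrange ▸ hc
    simp only [mem_image, mem_univ, true_and, not_exists] at hc hc'
    simp [hc, hc']

lemma pair_mem_iff_of_vertexStar_eq_image (hG : ∀ e ∈ EG, #e = 2) (hH : ∀ e ∈ EH, #e = 2)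
    (hJ : Set.InjOn J EG) {σ : VG → VH} (hσ : Function.Injective σ)
    (hstar : ∀ u, vertexStar EH (σ u) = (vertexStar EG u).image J) (v w : VG) :
    {v, w} ∈ EG ↔ {σ v, σ w} ∈ EH := by
  rcases eq_or_ne v w with rfl | hvw
  · simp only [pair_eq_singleton]
    exact iff_of_false (fun h => by simpa using hG _ h) (fun h => by simpa using hH _ h)
  rw [pair_mem_iff_vertexStar_inter_nonempty hG hvw,
    pair_mem_iff_vertexStar_inter_nonempty hH (hσ.ne hvw), hstar, hstar,
    ← image_inter_of_injOn _ _ (hJ.mono (by simp [vertexStar_subset])), image_nonempty]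

end ItemsetIso

theorem stmt_11_general {VG VH : Type*} [Fintype VG] [Fintype VH] [DecidableEq VG] [DecidableEq VH]
    (EG : Finset (Finset VG)) (EH : Finset (Finset VH))
    (hG : ∀ e ∈ EG, e.card = 2) (hH : ∀ e ∈ EH, e.card = 2)
    (hniG : ∀ v : VG, ∃ e ∈ EG, v ∈ e) :
    (∃ σ : VG → VH, Function.Bijective σ ∧
        ∀ v w : VG, ({v, w} : Finset VG) ∈ EG ↔ ({σ v, σ w} : Finset VH) ∈ EH) ↔
    (∃ J : Finset VG → Finset VH, Set.BijOn J ↑EG ↑EH ∧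
        (Finset.univ.image (fun u : VG => EG.filter (fun e => u ∈ e))).image
            (fun A => A.image J) =
          Finset.univ.image (fun h : VH => EH.filter (fun e => h ∈ e))) := by
  constructor
  · rintro ⟨σ, hσ, hadj⟩
    let τ := Equiv.ofBijective σ hσ
    exact ⟨τ.finsetCongr, τ.finsetCongr.bijOn (finsetCongr_mem_iff hG hH τ hadj),
      image_incidenceItemset_finsetCongr hG hH τ hadj⟩
  · rintro ⟨J, hJ, hST⟩
    obtain ⟨σ, hσ⟩ := exists_equiv_vertexStar_eq_image hG hH hniG hJ.injOn hST
    exact ⟨σ, σ.bijective, pair_mem_iff_of_vertexStar_eq_image hG hH hJ.injOn σ.injective hσ⟩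

theorem stmt_11 {VG VH : Type*} [Fintype VG] [Fintype VH] [DecidableEq VG] [DecidableEq VH]
    (EG : Finset (Finset VG)) (EH : Finset (Finset VH))
    (hG : ∀ e ∈ EG, e.card = 2) (hH : ∀ e ∈ EH, e.card = 2)
    (hniG : ∀ v : VG, ∃ e ∈ EG, v ∈ e) (hniH : ∀ v : VH, ∃ e ∈ EH, v ∈ e) :
    (∃ σ : VG → VH, Function.Bijective σ ∧
        ∀ v w : VG, ({v, w} : Finset VG) ∈ EG ↔ ({σ v, σ w} : Finset VH) ∈ EH) ↔
    (∃ J : Finset VG → Finset VH, Set.BijOn J ↑EG ↑EH ∧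
        (Finset.univ.image (fun u : VG => EG.filter (fun e => u ∈ e))).image
            (fun A => A.image J) =
          Finset.univ.image (fun h : VH => EH.filter (fun e => h ∈ e))) :=
  stmt_11_general EG EH hG hH hniG
end

section
/- Converse direction of the hypergraph reduction: let S over D_S and T over D_T be finite itemsets such that the column maps s ↦ E_s = { I ∈ S | s ∈ I } and t ↦ E_t = { I' ∈ T | t ∈ I' } are injective, and every item of S and of T is nonempty. If the hypergraphs G = (S, { E_s | s ∈ D_S }) and H = (T, { E_t | t ∈ D_T }) are isomorphic via a bijection σ : S → T with σ '' E_s ∈ E_H for each s (and conversely), then S and T are isomorphic as itemsets. -/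
theorem stmt_14 {DS DT : Type*} [Fintype DS] [Fintype DT] [DecidableEq DS] [DecidableEq DT]
    (S : Finset (Finset DS)) (T : Finset (Finset DT))
    (hS : ∀ s s' : DS, s ≠ s' →
      S.filter (fun I => s ∈ I) ≠ S.filter (fun I => s' ∈ I))
    (hT : ∀ t t' : DT, t ≠ t' →
      T.filter (fun I => t ∈ I) ≠ T.filter (fun I => t' ∈ I))
    (hSne : ∀ I ∈ S, I.Nonempty) (hTne : ∀ I ∈ T, I.Nonempty)
    (hiso : ∃ σ : Finset DS → Finset DT, Set.BijOn σ ↑S ↑T ∧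
      ∀ A : Finset (Finset DS), A ⊆ S →
        (A ∈ Finset.univ.image (fun s : DS => S.filter (fun I => s ∈ I)) ↔
          A.image σ ∈ Finset.univ.image (fun t : DT => T.filter (fun I => t ∈ I)))) :
    ∃ γ : DS → DT, Function.Bijective γ ∧ S.image (fun I => I.image γ) = T := by
  obtain ⟨σ, hbij, hedge⟩ := hiso
  have hmaps := hbij.mapsTo
  have hinj := hbij.injOn
  have hsurj := hbij.surjOn
  -- forward map
  have key : ∀ s : DS, ∃ t : DT,
      (S.filter (fun I => s ∈ I)).image σ = T.filter (fun I => t ∈ I) := by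
    intro s
    have h1 : S.filter (fun I => s ∈ I) ∈
        Finset.univ.image (fun s : DS => S.filter (fun I => s ∈ I)) := by
      exact Finset.mem_image.2 ⟨s, Finset.mem_univ s, rfl⟩
    have h2 := (hedge _ (Finset.filter_subset _ _)).1 h1
    obtain ⟨t, -, ht⟩ := Finset.mem_image.1 h2
    exact ⟨t, ht.symm⟩
  choose γ hγ using key
  -- image cancellation on subsets of S
  have imginj : ∀ A B : Finset (Finset DS), A ⊆ S → B ⊆ S →
      A.image σ = B.image σ → A = B := by
    intro A B hA hB h
    ext I
    constructor
    · intro hI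
      have : σ I ∈ B.image σ := h ▸ Finset.mem_image_of_mem σ hI
      obtain ⟨J, hJ, hJI⟩ := Finset.mem_image.1 this
      rwa [hinj (hB hJ) (hA hI) hJI] at hJ
    · intro hI
      have : σ I ∈ A.image σ := h ▸ Finset.mem_image_of_mem σ hI
      obtain ⟨J, hJ, hJI⟩ := Finset.mem_image.1 this
      rwa [hinj (hA hJ) (hB hI) hJI] at hJ
  have hγinj : Function.Injective γ := by
    intro s s' h
    by_contra hne
    apply hS s s' hne
    apply imginj _ _ (Finset.filter_subset _ _) (Finset.filter_subset _ _)
    rw [hγ s, hγ s', h]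
  -- reverse map
  have key' : ∀ t : DT, ∃ s : DS,
      S.filter (fun I => σ I ∈ T.filter (fun J => t ∈ J)) = S.filter (fun I => s ∈ I) := by
    intro t
    set A := S.filter (fun I => σ I ∈ T.filter (fun J => t ∈ J)) with hA
    have hAS : A ⊆ S := Finset.filter_subset _ _
    have hAimg : A.image σ = T.filter (fun J => t ∈ J) := by
      ext J
      simp only [Finset.mem_image]
      constructor
      · rintro ⟨I, hI, rfl⟩
        exact (Finset.mem_filter.1 hI).2
      · intro hJ
        have hJT : J ∈ T := (Finset.mem_filter.1 hJ).1
        obtain ⟨I, hI, rfl⟩ := hsurj hJT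
        have hI' : I ∈ S := hI
        exact ⟨I, Finset.mem_filter.2 ⟨hI', hJ⟩, rfl⟩
    have h2 : A.image σ ∈ Finset.univ.image (fun t : DT => T.filter (fun I => t ∈ I)) := by
      rw [hAimg]; exact Finset.mem_image.2 ⟨t, Finset.mem_univ t, rfl⟩
    have h1 := (hedge A hAS).2 h2
    obtain ⟨s, -, hs⟩ := Finset.mem_image.1 h1
    exact ⟨s, hs.symm⟩
  choose δ hδ using key'
  have hδinj : Function.Injective δ := by
    intro t t' h
    by_contra hne
    apply hT t t' hne
    have e1 : (S.filter (fun I => σ I ∈ T.filter (fun J => t ∈ J))).image σ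
        = T.filter (fun J => t ∈ J) := by
      ext J
      simp only [Finset.mem_image]
      constructor
      · rintro ⟨I, hI, rfl⟩
        exact (Finset.mem_filter.1 hI).2
      · intro hJ
        obtain ⟨I, hI, rfl⟩ := hsurj (Finset.mem_filter.1 hJ).1
        exact ⟨I, Finset.mem_filter.2 ⟨hI, hJ⟩, rfl⟩
    have e2 : (S.filter (fun I => σ I ∈ T.filter (fun J => t' ∈ J))).image σ
        = T.filter (fun J => t' ∈ J) := by
      ext J
      simp only [Finset.mem_image]
      constructor
      · rintro ⟨I, hI, rfl⟩
        exact (Finset.mem_filter.1 hI).2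
      · intro hJ
        obtain ⟨I, hI, rfl⟩ := hsurj (Finset.mem_filter.1 hJ).1
        exact ⟨I, Finset.mem_filter.2 ⟨hI, hJ⟩, rfl⟩
    rw [← e1, ← e2, hδ t, hδ t', h]
  have hcard : Fintype.card DS = Fintype.card DT :=
    le_antisymm (Fintype.card_le_of_injective γ hγinj) (Fintype.card_le_of_injective δ hδinj)
  have hγbij : Function.Bijective γ :=
    (Fintype.bijective_iff_injective_and_card γ).2 ⟨hγinj, hcard⟩
  refine ⟨γ, hγbij, ?_⟩
  -- key: for I ∈ S, I.image γ = σ I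
  have himg : ∀ I ∈ S, I.image γ = σ I := by
    intro I hI
    ext t
    obtain ⟨s, rfl⟩ := hγbij.2 t
    have hchain : s ∈ I ↔ γ s ∈ σ I := by
      constructor
      · intro hs
        have : σ I ∈ (S.filter (fun I => s ∈ I)).image σ :=
          Finset.mem_image_of_mem σ (Finset.mem_filter.2 ⟨hI, hs⟩)
        rw [hγ s] at this
        exact (Finset.mem_filter.1 this).2
      · intro ht
        have : σ I ∈ T.filter (fun J => γ s ∈ J) :=
          Finset.mem_filter.2 ⟨hmaps hI, ht⟩
        rw [← hγ s] at this
        obtain ⟨J, hJ, hJI⟩ := Finset.mem_image.1 this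
        have := hinj (Finset.filter_subset _ _ hJ) hI hJI
        subst this
        exact (Finset.mem_filter.1 hJ).2
    simp only [Finset.mem_image]
    constructor
    · rintro ⟨s', hs', h⟩
      obtain rfl := hγinj h
      exact hchain.1 hs'
    · intro h
      exact ⟨s, hchain.2 h, rfl⟩
  have : S.image (fun I => I.image γ) = S.image σ := by
    apply Finset.image_congr
    intro I hI
    exact himg I hI
  rw [this]
  apply Finset.Subset.antisymm
  · intro J hJ
    obtain ⟨I, hI, rfl⟩ := Finset.mem_image.1 hJ
    exact hmaps hI
  · intro J hJ
    obtain ⟨I, hI, rfl⟩ := hsurj hJ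
    exact Finset.mem_image_of_mem σ hI
end
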